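/- Assume conditions (A1)–(A4). If p_n^2/n = o(1), then for every Δ > 0, sup over β with ||β − β_{n0}|| ≤ Δ√(p_n/n) and over unit vectors b ∈ R^{p_n} of |b^T [D_n(β) − D̄_n(β)] b| is O_p(√(n p_n)). -/

import Mathlib

open MeasureTheory ProbabilityTheory Filter Matrix
open scoped BigOperators ENNReal NNReal Topology

noncomputable section

namespace GEE

/-- Euclidean norm of a vector in `Fin k → ℝ`. -/
def vnorm {k : ℕ} (v : Fin k → ℝ) : ℝ := Real.sqrt (∑ i, v i ^ 2)

/-- Frobenius norm of a real matrix. -/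
def fnorm {a b : ℕ} (M : Matrix (Fin a) (Fin b) ℝ) : ℝ :=
  Real.sqrt (∑ i, ∑ j, M i j ^ 2)

/-- The logistic (inverse logit) function. -/
def logistic (t : ℝ) : ℝ := Real.exp t / (1 + Real.exp t)

/-- `Z_n = O_p(a_n)` : boundedness in probability of `Z_n / a_n`. -/
def IsBigOP {Ω : ℕ → Type} [∀ n, MeasurableSpace (Ω n)]
    (P : ∀ n, Measure (Ω n)) (Z : ∀ n, Ω n → ℝ) (a : ℕ → ℝ) : Prop :=
  ∀ ε : ℝ, 0 < ε → ∃ C : ℝ, 0 < C ∧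
    ∀ᶠ n in atTop, P n {ω | C * a n < |Z n ω|} ≤ ENNReal.ofReal ε

/-- `Z_n = o_p(a_n)` : `Z_n / a_n` converges to `0` in probability. -/
def IsLittleOP {Ω : ℕ → Type} [∀ n, MeasurableSpace (Ω n)]
    (P : ∀ n, Measure (Ω n)) (Z : ∀ n, Ω n → ℝ) (a : ℕ → ℝ) : Prop :=
  ∀ ε : ℝ, 0 < ε →
    Tendsto (fun n => P n {ω | ε * a n < |Z n ω|}) atTop (𝓝 0)

/-- Convergence in distribution to the standard normal law, stated via CDFs. -/
def TendstoStdNormal {Ω : ℕ → Type} [∀ n, MeasurableSpace (Ω n)]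
    (P : ∀ n, Measure (Ω n)) (Z : ∀ n, Ω n → ℝ) : Prop :=
  ∀ t : ℝ, Tendsto (fun n => (P n {ω | Z n ω ≤ t}).toReal) atTop
    (𝓝 ((gaussianReal 0 1 (Set.Iic t)).toReal))

/-- Convergence in distribution to the `l`-dimensional standard normal law `N_l(0, I_l)`. -/
def TendstoStdNormalVec {Ω : ℕ → Type} [∀ n, MeasurableSpace (Ω n)] (l : ℕ)
    (P : ∀ n, Measure (Ω n)) (Z : ∀ n, Ω n → Fin l → ℝ) : Prop :=
  ∀ t : Fin l → ℝ, Tendsto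
    (fun n => (P n {ω | ∀ j, Z n ω j ≤ t j}).toReal) atTop
    (𝓝 (((Measure.pi fun _ : Fin l => gaussianReal 0 1) {x | ∀ j, x j ≤ t j}).toReal))

/-- The chi-squared distribution with `l` degrees of freedom, realized as the law of the
sum of squares of `l` i.i.d. standard normals. -/
def chiSq (l : ℕ) : Measure ℝ :=
  Measure.map (fun x : Fin l → ℝ => ∑ j, x j ^ 2)
    (Measure.pi fun _ : Fin l => gaussianReal 0 1)

/-- Convergence in distribution to the chi-squared law with `l` degrees of freedom. -/
def TendstoChiSq {Ω : ℕ → Type} [∀ n, MeasurableSpace (Ω n)] (l : ℕ)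
    (P : ∀ n, Measure (Ω n)) (Z : ∀ n, Ω n → ℝ) : Prop :=
  ∀ t : ℝ, Tendsto (fun n => (P n {ω | Z n ω ≤ t}).toReal) atTop
    (𝓝 ((chiSq l (Set.Iic t)).toReal))

/-- Marginal mean vector `π_i(β)` of cluster `i` under the marginal logistic model. -/
def piv {a b : ℕ} (Xi : Matrix (Fin a) (Fin b) ℝ) (β : Fin b → ℝ) : Fin a → ℝ :=
  fun j => logistic (Xi.mulVec β j)

/-- The diagonal matrix `A_i(β)^{1/2}`. -/
def Ahalf {a b : ℕ} (Xi : Matrix (Fin a) (Fin b) ℝ) (β : Fin b → ℝ) :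
    Matrix (Fin a) (Fin a) ℝ :=
  Matrix.diagonal fun j => Real.sqrt (piv Xi β j * (1 - piv Xi β j))

/-- The diagonal matrix `A_i(β)^{-1/2}`. -/
def Ainvhalf {a b : ℕ} (Xi : Matrix (Fin a) (Fin b) ℝ) (β : Fin b → ℝ) :
    Matrix (Fin a) (Fin a) ℝ :=
  Matrix.diagonal fun j => (Real.sqrt (piv Xi β j * (1 - piv Xi β j)))⁻¹

/-- Standardized residual `ε_i(β) = A_i(β)^{-1/2} (Y_i - π_i(β))`. -/
def eps {a b : ℕ} (Xi : Matrix (Fin a) (Fin b) ℝ) (β : Fin b → ℝ) (Yi : Fin a → ℝ) :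
    Fin a → ℝ :=
  (Ainvhalf Xi β).mulVec (Yi - piv Xi β)

/-- Single-cluster contribution `X_iᵀ A_i^{1/2}(β) W A_i^{-1/2}(β) (Y_i - π_i(β))` to a GEE
estimating function with working inverse-correlation matrix `W`. -/
def Scluster {a b : ℕ} (Xi : Matrix (Fin a) (Fin b) ℝ) (W : Matrix (Fin a) (Fin a) ℝ)
    (β : Fin b → ℝ) (Yi : Fin a → ℝ) : Fin b → ℝ :=
  (Xiᵀ * Ahalf Xi β * W * Ainvhalf Xi β).mulVec (Yi - piv Xi β)

/-- Single-cluster contribution `X_iᵀ A_i^{1/2}(β) W A_i^{1/2}(β) X_i` to `H̄_n(β)`. -/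
def Hcluster {a b : ℕ} (Xi : Matrix (Fin a) (Fin b) ℝ) (W : Matrix (Fin a) (Fin a) ℝ)
    (β : Fin b → ℝ) : Matrix (Fin b) (Fin b) ℝ :=
  Xiᵀ * Ahalf Xi β * W * Ahalf Xi β * Xi

/-- Single-cluster contribution `X_iᵀ A_i^{1/2}(β) W R W A_i^{1/2}(β) X_i` to `M̄_n(β)`. -/
def Mcluster {a b : ℕ} (Xi : Matrix (Fin a) (Fin b) ℝ) (W R : Matrix (Fin a) (Fin a) ℝ)
    (β : Fin b → ℝ) : Matrix (Fin b) (Fin b) ℝ :=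
  Xiᵀ * Ahalf Xi β * W * R * W * Ahalf Xi β * Xi

/-- Single-cluster contribution `X_iᵀ A_i^{1/2}(β) W ε_i(β) ε_i(β)ᵀ W A_i^{1/2}(β) X_i` to the
middle of the sandwich estimator. -/
def Mhatcluster {a b : ℕ} (Xi : Matrix (Fin a) (Fin b) ℝ) (W : Matrix (Fin a) (Fin a) ℝ)
    (β : Fin b → ℝ) (Yi : Fin a → ℝ) : Matrix (Fin b) (Fin b) ℝ :=
  Xiᵀ * Ahalf Xi β * W * vecMulVec (eps Xi β Yi) (eps Xi β Yi) * W * Ahalf Xi β * Xi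

/-- The Jacobian matrix (`∂f/∂βᵀ`) of a map `f : (Fin b → ℝ) → (Fin b → ℝ)` at `β`. -/
def jacobian {b : ℕ} (f : (Fin b → ℝ) → (Fin b → ℝ)) (β : Fin b → ℝ) :
    Matrix (Fin b) (Fin b) ℝ :=
  Matrix.of fun k l => fderiv ℝ (fun x => f x k) β (Pi.single l 1)

/-- Smallest Rayleigh quotient value over unit vectors; equals `λ_min(M)` for symmetric `M`. -/
def lmin {b : ℕ} (M : Matrix (Fin b) (Fin b) ℝ) : ℝ :=
  sInf {r | ∃ v : Fin b → ℝ, vnorm v = 1 ∧ r = v ⬝ᵥ M.mulVec v}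

/-- Largest Rayleigh quotient value over unit vectors; equals `λ_max(M)` for symmetric `M`. -/
def lmax {b : ℕ} (M : Matrix (Fin b) (Fin b) ℝ) : ℝ :=
  sSup {r | ∃ v : Fin b → ℝ, vnorm v = 1 ∧ r = v ⬝ᵥ M.mulVec v}

/-! General GEE versions (arbitrary smooth marginal mean function `μ`). -/

/-- Marginal mean vector `μ_i(β)` in the general GEE model with mean function `mu`. -/
def gpiv {a b : ℕ} (mu : ℝ → ℝ) (Xi : Matrix (Fin a) (Fin b) ℝ) (β : Fin b → ℝ) :
    Fin a → ℝ :=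
  fun j => mu (Xi.mulVec β j)

/-- `A_i(β)^{1/2}` in the general GEE model: diagonal with entries `√(μ̇(X_ijᵀ β))`. -/
def gAhalf {a b : ℕ} (mu : ℝ → ℝ) (Xi : Matrix (Fin a) (Fin b) ℝ) (β : Fin b → ℝ) :
    Matrix (Fin a) (Fin a) ℝ :=
  Matrix.diagonal fun j => Real.sqrt (deriv mu (Xi.mulVec β j))

/-- `A_i(β)^{-1/2}` in the general GEE model. -/
def gAinvhalf {a b : ℕ} (mu : ℝ → ℝ) (Xi : Matrix (Fin a) (Fin b) ℝ) (β : Fin b → ℝ) :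
    Matrix (Fin a) (Fin a) ℝ :=
  Matrix.diagonal fun j => (Real.sqrt (deriv mu (Xi.mulVec β j)))⁻¹

/-- Standardized residual in the general GEE model. -/
def geps {a b : ℕ} (mu : ℝ → ℝ) (Xi : Matrix (Fin a) (Fin b) ℝ) (β : Fin b → ℝ)
    (Yi : Fin a → ℝ) : Fin a → ℝ :=
  (gAinvhalf mu Xi β).mulVec (Yi - gpiv mu Xi β)

/-- Single-cluster contribution to the general GEE estimating function. -/
def gScluster {a b : ℕ} (mu : ℝ → ℝ) (Xi : Matrix (Fin a) (Fin b) ℝ)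
    (W : Matrix (Fin a) (Fin a) ℝ) (β : Fin b → ℝ) (Yi : Fin a → ℝ) : Fin b → ℝ :=
  (Xiᵀ * gAhalf mu Xi β * W * gAinvhalf mu Xi β).mulVec (Yi - gpiv mu Xi β)

/-- Single-cluster contribution to `H̄_n(β)` in the general GEE model. -/
def gHcluster {a b : ℕ} (mu : ℝ → ℝ) (Xi : Matrix (Fin a) (Fin b) ℝ)
    (W : Matrix (Fin a) (Fin a) ℝ) (β : Fin b → ℝ) : Matrix (Fin b) (Fin b) ℝ :=
  Xiᵀ * gAhalf mu Xi β * W * gAhalf mu Xi β * Xi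

/-- Single-cluster contribution to `M̄_n(β)` in the general GEE model. -/
def gMcluster {a b : ℕ} (mu : ℝ → ℝ) (Xi : Matrix (Fin a) (Fin b) ℝ)
    (W R : Matrix (Fin a) (Fin a) ℝ) (β : Fin b → ℝ) : Matrix (Fin b) (Fin b) ℝ :=
  Xiᵀ * gAhalf mu Xi β * W * R * W * gAhalf mu Xi β * Xi

end GEE

open GEE

/-!
The estimating function is linear in the working inverse correlation matrix `W`,
so `D_n(β) - D̄_n(β)` is minus the Jacobian of the estimating function with
`W = R̂⁻¹ - R̄⁻¹`. Its quadratic form along `b` is the derivative of `t ↦ bᵀ S(β + t b)`: a sum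
over clusters and pairs `(j, j')` of `W_{jj'}` times terms built from `√(π(1-π))`, the
standardized residual and their derivatives, all bounded as soon as `π(1-π)` is bounded below.
On the ball `‖β - β₀‖ ≤ Δ √(p/n)` the linear predictors move by at most `C Δ √(p²/n) → 0`, so
(A2) keeps `π(1-π) ≥ e⁻² b₁ (1 - b₂)` there, and with (A3) the quadratic form is bounded by
`‖R̂⁻¹ - R̄⁻¹‖_F · O(n)` for every outcome; (A4) turns this into `O_p(√(n p))`.
-/

namespace GEE

open Real

variable {m p N : ℕ}

lemma fnorm_nonneg {a b : ℕ} (M : Matrix (Fin a) (Fin b) ℝ) : 0 ≤ fnorm M := sqrt_nonneg _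

lemma entry_le_fnorm {a b : ℕ} (M : Matrix (Fin a) (Fin b) ℝ) (j : Fin a) (j' : Fin b) :
    |M j j'| ≤ fnorm M := by
  rw [fnorm, ← sqrt_sq_eq_abs]
  refine sqrt_le_sqrt ?_
  calc M j j' ^ 2 ≤ ∑ k', M j k' ^ 2 :=
        Finset.single_le_sum (f := fun k' => M j k' ^ 2) (fun _ _ => sq_nonneg _)
          (Finset.mem_univ j')
    _ ≤ ∑ k, ∑ k', M k k' ^ 2 :=
        Finset.single_le_sum (f := fun k => ∑ k', M k k' ^ 2)
          (fun _ _ => Finset.sum_nonneg fun _ _ => sq_nonneg _) (Finset.mem_univ j)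

lemma abs_sum_mul_le_fnorm_mul {a b : ℕ} (E : Matrix (Fin a) (Fin b) ℝ) (q : Fin a → Fin b → ℝ) :
    |∑ j, ∑ j', E j j' * q j j'| ≤ fnorm E * ∑ j, ∑ j', |q j j'| := by
  rw [Finset.mul_sum]
  refine (Finset.abs_sum_le_sum_abs _ _).trans (Finset.sum_le_sum fun j _ => ?_)
  rw [Finset.mul_sum]
  refine (Finset.abs_sum_le_sum_abs _ _).trans (Finset.sum_le_sum fun j' _ => ?_)
  rw [abs_mul]
  exact mul_le_mul_of_nonneg_right (entry_le_fnorm E j j') (abs_nonneg _)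

lemma sum_sum_sq_add_abs_mul_le (u : Fin m → ℝ) :
    ∑ j, ∑ j', (u j ^ 2 + |u j| * |u j'|) ≤ 2 * m * ∑ j, u j ^ 2 := by
  have hcs : (∑ j, |u j|) ^ 2 ≤ m * ∑ j, u j ^ 2 := by
    simpa [sq_abs] using sq_sum_le_card_mul_sum_sq (s := Finset.univ) (f := fun j => |u j|)
  have hsplit : ∑ j, ∑ j', (u j ^ 2 + |u j| * |u j'|) = m * ∑ j, u j ^ 2 + (∑ j, |u j|) ^ 2 := by
    simp only [Finset.sum_add_distrib, Finset.sum_const, Finset.card_univ, Fintype.card_fin,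
      nsmul_eq_mul, ← Finset.mul_sum, ← Finset.sum_mul, sq (∑ j, |u j|)]
  linarith

lemma abs_dotProduct_le_vnorm_mul_vnorm (v w : Fin p → ℝ) : |v ⬝ᵥ w| ≤ vnorm v * vnorm w := by
  rw [vnorm, vnorm, ← sqrt_sq_eq_abs, ← sqrt_mul (by positivity)]
  exact sqrt_le_sqrt (Finset.sum_mul_sq_le_sq_mul_sq Finset.univ v w)

lemma sum_sum_sq_dotProduct_eq (X : Fin N → Matrix (Fin m) (Fin p) ℝ) (b : Fin p → ℝ) :
    ∑ i, ∑ j, (X i j ⬝ᵥ b) ^ 2 = b ⬝ᵥ (∑ i, (X i)ᵀ * X i) *ᵥ b := by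
  rw [Matrix.sum_mulVec, dotProduct_sum]
  refine Finset.sum_congr rfl fun i _ => ?_
  rw [← Matrix.mulVec_mulVec, Matrix.dotProduct_mulVec, Matrix.vecMul_transpose, dotProduct]
  simp only [sq, Matrix.mulVec]

lemma sum_sum_sq_dotProduct_le {X : Fin N → Matrix (Fin m) (Fin p) ℝ} {b : Fin p → ℝ} {B : ℝ}
    (hN : 0 < N) (hb : vnorm b = 1)
    (h : (N : ℝ)⁻¹ * (b ⬝ᵥ (∑ i, (X i)ᵀ * X i) *ᵥ b) ≤ B * ∑ k, b k ^ 2) :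
    ∑ i, ∑ j, (X i j ⬝ᵥ b) ^ 2 ≤ |B| * N := by
  rw [sqrt_eq_one.1 hb, mul_one, inv_mul_le_iff₀ (Nat.cast_pos.2 hN)] at h
  rw [sum_sum_sq_dotProduct_eq]
  nlinarith [le_abs_self B]

lemma jacobian_eq_toMatrix' {f : (Fin p → ℝ) → Fin p → ℝ} {β : Fin p → ℝ}
    (hf : DifferentiableAt ℝ f β) :
    jacobian f β = LinearMap.toMatrix' (fderiv ℝ f β : (Fin p → ℝ) →ₗ[ℝ] Fin p → ℝ) := by
  ext k l
  rw [jacobian, Matrix.of_apply, LinearMap.toMatrix'_apply, fderiv_apply hf]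
  rfl

lemma jacobian_sub {f g : (Fin p → ℝ) → Fin p → ℝ} {β : Fin p → ℝ}
    (hf : DifferentiableAt ℝ f β) (hg : DifferentiableAt ℝ g β) :
    jacobian (fun x => f x - g x) β = jacobian f β - jacobian g β := by
  have hfg : DifferentiableAt ℝ (fun x => f x - g x) β := hf.sub hg
  rw [jacobian_eq_toMatrix' hf, jacobian_eq_toMatrix' hg, jacobian_eq_toMatrix' hfg,
    fderiv_fun_sub hf hg, ← map_sub]
  rfl

lemma dotProduct_jacobian_mulVec_eq {f : (Fin p → ℝ) → Fin p → ℝ} {β v : Fin p → ℝ} {d : ℝ}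
    (hf : DifferentiableAt ℝ f β) (hd : HasDerivAt (fun t : ℝ => v ⬝ᵥ f (β + t • v)) d 0) :
    v ⬝ᵥ jacobian f β *ᵥ v = d := by
  have hline : HasDerivAt (fun t : ℝ => f (β + t • v)) (fderiv ℝ f β v) 0 := by
    have h := ((hasDerivAt_id (0 : ℝ)).smul_const v).const_add β
    rw [one_smul] at h
    exact hf.hasFDerivAt.comp_hasDerivAt_of_eq 0 h (by simp)
  rw [jacobian_eq_toMatrix' hf, LinearMap.toMatrix'_mulVec]
  refine HasDerivAt.unique ?_ hd
  exact HasDerivAt.fun_sum fun k _ => (hasDerivAt_pi.1 hline k).const_mul (v k)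

lemma mul_sqrt_div_self {x : ℝ} (hx : 0 ≤ x) (y : ℝ) : x * √(y / x) = √(x * y) := by
  rcases hx.eq_or_lt with rfl | hx
  · simp
  rw [show x * y = x ^ 2 * (y / x) by field_simp, sqrt_mul (sq_nonneg x), sqrt_sq hx.le]

lemma abs_sSup_le_of_forall_mem_Icc {S : Set ℝ} {B : ℝ} (hB : 0 ≤ B)
    (h : ∀ r ∈ S, r ∈ Set.Icc 0 B) : |sSup S| ≤ B := by
  rw [abs_of_nonneg (Real.sSup_nonneg fun r hr => (h r hr).1)]
  exact Real.sSup_le (fun r hr => (h r hr).2) hB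

lemma IsBigOP.of_abs_le_mul {Ω : ℕ → Type} [∀ n, MeasurableSpace (Ω n)]
    {P : ∀ n, Measure (Ω n)} {Z V : ∀ n, Ω n → ℝ} {a c : ℕ → ℝ} {K : ℝ}
    (hV : IsBigOP P V a) (hc : ∀ n, 0 ≤ c n)
    (hZ : ∀ᶠ n in atTop, ∀ ω, |Z n ω| ≤ K * c n * |V n ω|) :
    IsBigOP P Z (fun n => c n * a n) := by
  intro ε hε
  obtain ⟨C, hC, hPV⟩ := hV ε hε
  refine ⟨max K 1 * C, by positivity, ?_⟩
  filter_upwards [hPV, hZ] with n hPn hZn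
  refine (measure_mono fun ω hω => ?_).trans hPn
  simp only [Set.mem_ofPred_eq] at hω ⊢
  by_contra! hVle
  have hK : K ≤ max K 1 := le_max_left K 1
  have hcn := hc n
  have : |Z n ω| ≤ max K 1 * C * (c n * a n) :=
    calc |Z n ω| ≤ K * c n * |V n ω| := hZn ω
      _ ≤ max K 1 * c n * (C * a n) := by gcongr
      _ = max K 1 * C * (c n * a n) := by ring
  linarith

lemma logistic_eq_sigmoid : logistic = sigmoid := by
  ext t
  rw [logistic, sigmoid_def, exp_neg]
  field_simp
  ring

lemma exp_neg_mul_sigmoid_le {s₀ s t : ℝ} (ht : 0 ≤ t) (hs : s₀ - t ≤ s) :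
    exp (-t) * sigmoid s₀ ≤ sigmoid s := by
  calc exp (-t) * sigmoid s₀ = (exp t + exp (-(s₀ - t)))⁻¹ := by
        rw [sigmoid_def, exp_neg, ← mul_inv, mul_add, mul_one, ← exp_add]; ring_nf
    _ ≤ sigmoid (s₀ - t) := inv_anti₀ (by positivity) (by linarith [one_le_exp ht])
    _ ≤ sigmoid s := sigmoid_le hs

lemma exp_neg_two_mul_sigmoid_var_le {s₀ s t : ℝ} (hs : |s - s₀| ≤ t) :
    exp (-(2 * t)) * (sigmoid s₀ * (1 - sigmoid s₀)) ≤ sigmoid s * (1 - sigmoid s) := by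
  have ht : 0 ≤ t := (abs_nonneg _).trans hs
  rw [abs_le] at hs
  have hlo : exp (-t) * sigmoid s₀ ≤ sigmoid s := exp_neg_mul_sigmoid_le ht (by linarith)
  have hhi : exp (-t) * sigmoid (-s₀) ≤ sigmoid (-s) := exp_neg_mul_sigmoid_le ht (by linarith)
  rw [sigmoid_neg, sigmoid_neg] at hhi
  calc exp (-(2 * t)) * (sigmoid s₀ * (1 - sigmoid s₀))
      = (exp (-t) * sigmoid s₀) * (exp (-t) * (1 - sigmoid s₀)) := by
        rw [show -(2 * t) = -t + -t by ring, exp_add]; ring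
    _ ≤ sigmoid s * (1 - sigmoid s) :=
        mul_le_mul hlo hhi (by have := sigmoid_le_one s₀; positivity) (sigmoid_nonneg s)

lemma exp_neg_two_mul_le_sigmoid_var {s₀ s b₁ b₂ : ℝ} (hs : |s - s₀| ≤ 1)
    (hπ : b₁ ≤ sigmoid s₀ ∧ sigmoid s₀ ≤ b₂) (hb₂ : b₂ ≤ 1) :
    exp (-2) * (b₁ * (1 - b₂)) ≤ sigmoid s * (1 - sigmoid s) := by
  have hshift := exp_neg_two_mul_sigmoid_var_le hs
  rw [mul_one] at hshift
  refine le_trans (mul_le_mul_of_nonneg_left ?_ (exp_nonneg _)) hshift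
  exact mul_le_mul hπ.1 (by linarith [hπ.2]) (by linarith) (sigmoid_nonneg _)

lemma eventually_abs_dotProduct_sub_le_one {d : ℕ → ℕ}
    {X : ∀ n, Fin n → Matrix (Fin m) (Fin (d n)) ℝ} {β₀ : ∀ n, Fin (d n) → ℝ} {C : ℝ}
    (hX : ∀ n (i : Fin n) j, vnorm (X n i j) ≤ C * √(d n))
    (hd : Tendsto (fun n => (d n : ℝ) ^ 2 / n) atTop (𝓝 0)) (Δ : ℝ) :
    ∀ᶠ n in atTop, ∀ (i : Fin n) j (β : Fin (d n) → ℝ), vnorm (β - β₀ n) ≤ Δ * √(d n / n) →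
      |X n i j ⬝ᵥ β - X n i j ⬝ᵥ β₀ n| ≤ 1 := by
  have hsmall : Tendsto (fun n => C * Δ * √((d n : ℝ) ^ 2 / n)) atTop (𝓝 0) := by
    simpa using ((continuous_sqrt.tendsto 0).comp hd).const_mul (C * Δ)
  filter_upwards [hsmall.eventually (eventually_le_nhds one_pos)] with n hn i j β hβ
  rw [← dotProduct_sub]
  calc |X n i j ⬝ᵥ (β - β₀ n)| ≤ vnorm (X n i j) * vnorm (β - β₀ n) :=
        abs_dotProduct_le_vnorm_mul_vnorm _ _
    _ ≤ C * √(d n) * (Δ * √(d n / n)) :=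
        mul_le_mul (hX n i j) hβ (sqrt_nonneg _) ((sqrt_nonneg _).trans (hX n i j))
    _ = C * Δ * √((d n : ℝ) ^ 2 / n) := by
        rw [mul_mul_mul_comm, ← sqrt_mul (Nat.cast_nonneg _), mul_div_assoc', ← sq]
    _ ≤ 1 := hn

-- The diagonal entry of `A^{1/2}` and the standardized residual `ε`, at linear predictor `s`.
def sigmoidSd (s : ℝ) : ℝ := √(sigmoid s * (1 - sigmoid s))

def stdResid (y s : ℝ) : ℝ := (y - sigmoid s) / sigmoidSd s

lemma sigmoid_var_pos (s : ℝ) : 0 < sigmoid s * (1 - sigmoid s) :=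
  mul_pos (sigmoid_pos s) (sub_pos.2 (sigmoid_lt_one s))

lemma sigmoidSd_pos (s : ℝ) : 0 < sigmoidSd s := sqrt_pos.2 (sigmoid_var_pos s)

lemma sigmoidSd_le_half (s : ℝ) : sigmoidSd s ≤ 1 / 2 := by
  rw [sigmoidSd, sqrt_le_left (by norm_num)]
  nlinarith [sq_nonneg (sigmoid s - 1 / 2)]

lemma abs_sigmoidSd_le_half (s : ℝ) : |sigmoidSd s| ≤ 1 / 2 := by
  rw [abs_of_pos (sigmoidSd_pos s)]; exact sigmoidSd_le_half s

lemma abs_one_sub_two_mul_sigmoid_le (s : ℝ) : |1 - 2 * sigmoid s| ≤ 1 :=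
  abs_le.2 ⟨by linarith [sigmoid_lt_one s], by linarith [sigmoid_pos s]⟩

lemma hasDerivAt_sigmoidSd (s : ℝ) :
    HasDerivAt sigmoidSd (sigmoidSd s * (1 - 2 * sigmoid s) / 2) s := by
  have hvar := ((hasDerivAt_sigmoid s).mul ((hasDerivAt_sigmoid s).const_sub 1)).sqrt
    (sigmoid_var_pos s).ne'
  refine (show HasDerivAt sigmoidSd _ s from hvar).congr_deriv ?_
  have hsq : sigmoidSd s ^ 2 = sigmoid s * (1 - sigmoid s) := sq_sqrt (sigmoid_var_pos s).le
  change _ / (2 * sigmoidSd s) = _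
  field_simp [(sigmoidSd_pos s).ne']
  linear_combination (2 * sigmoid s - 1) * hsq

lemma hasDerivAt_stdResid (y s : ℝ) :
    HasDerivAt (stdResid y) (-sigmoidSd s - stdResid y s * (1 - 2 * sigmoid s) / 2) s := by
  refine (show HasDerivAt (stdResid y) _ s from ((hasDerivAt_sigmoid s).const_sub y).div
    (hasDerivAt_sigmoidSd s) (sigmoidSd_pos s).ne').congr_deriv ?_
  have hsq : sigmoidSd s ^ 2 = sigmoid s * (1 - sigmoid s) := sq_sqrt (sigmoid_var_pos s).le
  simp only [stdResid]
  field_simp [(sigmoidSd_pos s).ne']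
  linear_combination 2 * hsq

lemma abs_stdResid_le {y s c : ℝ} (hy : y ∈ Set.Icc (0 : ℝ) 1) (hc : 0 < c)
    (hcs : c ≤ sigmoid s * (1 - sigmoid s)) : |stdResid y s| ≤ (√c)⁻¹ := by
  have hres : |y - sigmoid s| ≤ 1 :=
    abs_le.2 ⟨by linarith [hy.1, sigmoid_le_one s], by linarith [hy.2, sigmoid_nonneg s]⟩
  rw [stdResid, abs_div, abs_of_pos (sigmoidSd_pos s), ← one_div]
  exact div_le_div₀ zero_le_one hres (sqrt_pos.2 hc) (sqrt_le_sqrt hcs)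

def jacQuadTerm (y s s' u u' : ℝ) : ℝ :=
  u * (sigmoidSd s * (1 - 2 * sigmoid s) / 2 * u * stdResid y s' +
    sigmoidSd s * ((-sigmoidSd s' - stdResid y s' * (1 - 2 * sigmoid s') / 2) * u'))

lemma hasDerivAt_jacQuadTerm (y s s' u u' : ℝ) :
    HasDerivAt (fun t : ℝ => u * sigmoidSd (s + t * u) * stdResid y (s' + t * u'))
      (jacQuadTerm y s s' u u') 0 := by
  have hline : ∀ s u : ℝ, HasDerivAt (fun t : ℝ => s + t * u) u 0 := fun s u => by
    simpa using ((hasDerivAt_id (0 : ℝ)).mul_const u).const_add s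
  have hA := (hasDerivAt_sigmoidSd s).comp_of_eq (0 : ℝ) (hline s u) (by simp)
  have hR := (hasDerivAt_stdResid y s').comp_of_eq (0 : ℝ) (hline s' u') (by simp)
  refine ((hA.const_mul u).fun_mul hR).congr_deriv ?_
  simp only [Function.comp_apply, zero_mul, add_zero, jacQuadTerm]
  ring

lemma abs_jacQuadTerm_le {y s s' u u' H : ℝ} (hH : |stdResid y s'| ≤ H) :
    |jacQuadTerm y s s' u u'| ≤ (1 + H) / 4 * (u ^ 2 + |u| * |u'|) := by
  have hA := abs_sigmoidSd_le_half s
  have hA' := abs_sigmoidSd_le_half s'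
  have he := abs_one_sub_two_mul_sigmoid_le s
  have he' := abs_one_sub_two_mul_sigmoid_le s'
  have hH0 : 0 ≤ H := (abs_nonneg _).trans hH
  have h₁ : |sigmoidSd s * (1 - 2 * sigmoid s) / 2 * u * stdResid y s'| ≤ H / 4 * |u| := by
    rw [abs_mul, abs_mul, abs_div, abs_mul, abs_two]
    calc |sigmoidSd s| * |1 - 2 * sigmoid s| / 2 * |u| * |stdResid y s'|
        ≤ 1 / 2 * 1 / 2 * |u| * H := by gcongr
      _ = H / 4 * |u| := by ring
  have h₂ : |-sigmoidSd s' - stdResid y s' * (1 - 2 * sigmoid s') / 2| ≤ (1 + H) / 2 := by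
    refine (abs_sub _ _).trans ?_
    rw [abs_neg, abs_div, abs_mul, abs_two]
    calc |sigmoidSd s'| + |stdResid y s'| * |1 - 2 * sigmoid s'| / 2
        ≤ 1 / 2 + H * 1 / 2 := by gcongr
      _ = (1 + H) / 2 := by ring
  have h₃ : |sigmoidSd s * ((-sigmoidSd s' - stdResid y s' * (1 - 2 * sigmoid s') / 2) * u')|
      ≤ (1 + H) / 4 * |u'| := by
    rw [abs_mul, abs_mul]
    calc |sigmoidSd s| * (|-sigmoidSd s' - stdResid y s' * (1 - 2 * sigmoid s') / 2| * |u'|)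
        ≤ 1 / 2 * ((1 + H) / 2 * |u'|) := by gcongr
      _ = (1 + H) / 4 * |u'| := by ring
  rw [jacQuadTerm, abs_mul]
  calc |u| * |sigmoidSd s * (1 - 2 * sigmoid s) / 2 * u * stdResid y s' +
        sigmoidSd s * ((-sigmoidSd s' - stdResid y s' * (1 - 2 * sigmoid s') / 2) * u')|
      ≤ |u| * (H / 4 * |u| + (1 + H) / 4 * |u'|) := by
        gcongr; exact (abs_add_le _ _).trans (add_le_add h₁ h₃)
    _ ≤ (1 + H) / 4 * (u ^ 2 + |u| * |u'|) := by
        rw [← sq_abs u]; nlinarith [abs_nonneg u, abs_nonneg u']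

lemma differentiable_sigmoidSd : Differentiable ℝ sigmoidSd :=
  fun s => (hasDerivAt_sigmoidSd s).differentiableAt

lemma differentiable_stdResid (y : ℝ) : Differentiable ℝ (stdResid y) :=
  fun s => (hasDerivAt_stdResid y s).differentiableAt

lemma Scluster_apply (Xi : Matrix (Fin m) (Fin p) ℝ) (W : Matrix (Fin m) (Fin m) ℝ)
    (x : Fin p → ℝ) (Yi : Fin m → ℝ) (k : Fin p) :
    Scluster Xi W x Yi k =
      ∑ j, ∑ j', Xi j k * (sigmoidSd (Xi j ⬝ᵥ x) * (W j j' * stdResid (Yi j') (Xi j' ⬝ᵥ x))) := by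
  simp only [Scluster, Ahalf, Ainvhalf, piv, logistic_eq_sigmoid, sigmoidSd, stdResid,
    Matrix.mulVec, dotProduct, Matrix.mul_apply, Matrix.transpose_apply, Matrix.diagonal_apply,
    Pi.sub_apply, mul_ite, mul_zero, Finset.sum_ite_eq', Finset.mem_univ, if_true,
    Finset.sum_mul]
  rw [Finset.sum_comm]
  refine Finset.sum_congr rfl fun j _ => Finset.sum_congr rfl fun j' _ => ?_
  rw [div_eq_mul_inv]
  ring

lemma Scluster_sub_left (Xi : Matrix (Fin m) (Fin p) ℝ) (W₁ W₂ : Matrix (Fin m) (Fin m) ℝ)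
    (x : Fin p → ℝ) (Yi : Fin m → ℝ) :
    Scluster Xi (W₁ - W₂) x Yi = Scluster Xi W₁ x Yi - Scluster Xi W₂ x Yi := by
  simp only [Scluster, Matrix.mul_sub, Matrix.sub_mul, Matrix.sub_mulVec]

lemma differentiable_Scluster (Xi : Matrix (Fin m) (Fin p) ℝ) (W : Matrix (Fin m) (Fin m) ℝ)
    (Yi : Fin m → ℝ) : Differentiable ℝ (fun x => Scluster Xi W x Yi) := by
  have hsd := differentiable_sigmoidSd
  have hres := differentiable_stdResid
  have hdot : ∀ v : Fin p → ℝ, Differentiable ℝ (v ⬝ᵥ ·) := fun v => by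
    unfold dotProduct; fun_prop
  refine differentiable_pi.2 fun k => ?_
  simp_rw [Scluster_apply]
  fun_prop

lemma dotProduct_Scluster (Xi : Matrix (Fin m) (Fin p) ℝ) (W : Matrix (Fin m) (Fin m) ℝ)
    (x b : Fin p → ℝ) (Yi : Fin m → ℝ) :
    b ⬝ᵥ Scluster Xi W x Yi = ∑ j, ∑ j', W j j' *
      ((Xi j ⬝ᵥ b) * sigmoidSd (Xi j ⬝ᵥ x) * stdResid (Yi j') (Xi j' ⬝ᵥ x)) := by
  simp only [dotProduct, Scluster_apply, Finset.mul_sum, Finset.sum_mul]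
  rw [Finset.sum_comm]
  refine Finset.sum_congr rfl fun j _ => ?_
  rw [Finset.sum_comm]
  refine Finset.sum_congr rfl fun j' _ => Finset.sum_congr rfl fun k _ => ?_
  ring

lemma hasDerivAt_dotProduct_Scluster_line (Xi : Matrix (Fin m) (Fin p) ℝ)
    (W : Matrix (Fin m) (Fin m) ℝ) (β b : Fin p → ℝ) (Yi : Fin m → ℝ) :
    HasDerivAt (fun t : ℝ => b ⬝ᵥ Scluster Xi W (β + t • b) Yi)
      (∑ j, ∑ j', W j j' *
        jacQuadTerm (Yi j') (Xi j ⬝ᵥ β) (Xi j' ⬝ᵥ β) (Xi j ⬝ᵥ b) (Xi j' ⬝ᵥ b)) 0 := by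
  have hline : ∀ (v : Fin p → ℝ) (t : ℝ), v ⬝ᵥ (β + t • b) = v ⬝ᵥ β + t * (v ⬝ᵥ b) := by
    intro v t; rw [dotProduct_add, dotProduct_smul, smul_eq_mul]
  simp only [dotProduct_Scluster, hline]
  refine HasDerivAt.fun_sum fun j _ => HasDerivAt.fun_sum fun j' _ => ?_
  simpa only [mul_assoc] using
    (hasDerivAt_jacQuadTerm (Yi j') (Xi j ⬝ᵥ β) (Xi j' ⬝ᵥ β) (Xi j ⬝ᵥ b) (Xi j' ⬝ᵥ b)).const_mul
      (W j j')

lemma abs_dotProduct_jacobian_sum_Scluster_le (X : Fin N → Matrix (Fin m) (Fin p) ℝ)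
    (Y : Fin N → Fin m → ℝ) (W : Matrix (Fin m) (Fin m) ℝ) (β b : Fin p → ℝ) {c : ℝ}
    (hc : 0 < c) (hY : ∀ i j, Y i j ∈ Set.Icc (0 : ℝ) 1)
    (hvar : ∀ i j, c ≤ sigmoid (X i j ⬝ᵥ β) * (1 - sigmoid (X i j ⬝ᵥ β))) :
    |b ⬝ᵥ jacobian (fun x => ∑ i, Scluster (X i) W x (Y i)) β *ᵥ b| ≤
      fnorm W * ((1 + (√c)⁻¹) * m / 2 * ∑ i, ∑ j, (X i j ⬝ᵥ b) ^ 2) := by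
  set H := (√c)⁻¹
  have hderiv : HasDerivAt (fun t : ℝ => b ⬝ᵥ ∑ i, Scluster (X i) W (β + t • b) (Y i))
      (∑ i, ∑ j, ∑ j', W j j' *
        jacQuadTerm (Y i j') (X i j ⬝ᵥ β) (X i j' ⬝ᵥ β) (X i j ⬝ᵥ b) (X i j' ⬝ᵥ b)) 0 := by
    simp only [dotProduct_sum]
    exact HasDerivAt.fun_sum fun i _ => hasDerivAt_dotProduct_Scluster_line (X i) W β b (Y i)
  have hdiff : DifferentiableAt ℝ (fun x => ∑ i, Scluster (X i) W x (Y i)) β :=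
    (Differentiable.fun_sum fun i _ => differentiable_Scluster (X i) W (Y i)) β
  rw [dotProduct_jacobian_mulVec_eq hdiff hderiv, Finset.mul_sum, Finset.mul_sum]
  refine (Finset.abs_sum_le_sum_abs _ _).trans (Finset.sum_le_sum fun i _ => ?_)
  refine (abs_sum_mul_le_fnorm_mul W _).trans (mul_le_mul_of_nonneg_left ?_ (fnorm_nonneg W))
  calc ∑ j, ∑ j', |jacQuadTerm (Y i j') (X i j ⬝ᵥ β) (X i j' ⬝ᵥ β) (X i j ⬝ᵥ b) (X i j' ⬝ᵥ b)|
      ≤ ∑ j, ∑ j', (1 + H) / 4 * ((X i j ⬝ᵥ b) ^ 2 + |X i j ⬝ᵥ b| * |X i j' ⬝ᵥ b|) :=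
        Finset.sum_le_sum fun j _ => Finset.sum_le_sum fun j' _ =>
          abs_jacQuadTerm_le (abs_stdResid_le (hY i j') hc (hvar i j'))
    _ ≤ (1 + H) / 4 * (2 * m * ∑ j, (X i j ⬝ᵥ b) ^ 2) := by
        simp only [← Finset.mul_sum]
        exact mul_le_mul_of_nonneg_left (sum_sum_sq_add_abs_mul_le _) (by positivity)
    _ = (1 + H) * m / 2 * ∑ j, (X i j ⬝ᵥ b) ^ 2 := by ring

lemma negJacobian_sub_negJacobian_sum_Scluster (X : Fin N → Matrix (Fin m) (Fin p) ℝ)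
    (Y : Fin N → Fin m → ℝ) (W₁ W₂ : Matrix (Fin m) (Fin m) ℝ) (β : Fin p → ℝ) :
    -jacobian (fun x => ∑ i, Scluster (X i) W₁ x (Y i)) β -
        -jacobian (fun x => ∑ i, Scluster (X i) W₂ x (Y i)) β =
      -jacobian (fun x => ∑ i, Scluster (X i) (W₁ - W₂) x (Y i)) β := by
  have hdiff : ∀ W, DifferentiableAt ℝ (fun x => ∑ i, Scluster (X i) W x (Y i)) β :=
    fun W => (Differentiable.fun_sum fun i _ => differentiable_Scluster (X i) W (Y i)) β
  simp only [Scluster_sub_left, Finset.sum_sub_distrib]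
  rw [jacobian_sub (hdiff W₁) (hdiff W₂), neg_sub_neg, neg_sub]

lemma abs_dotProduct_negJacobian_sub_le (X : Fin N → Matrix (Fin m) (Fin p) ℝ)
    (Y : Fin N → Fin m → ℝ) (W₁ W₂ : Matrix (Fin m) (Fin m) ℝ) (β b : Fin p → ℝ) {c B : ℝ}
    (hc : 0 < c) (hY : ∀ i j, Y i j ∈ Set.Icc (0 : ℝ) 1)
    (hvar : ∀ i j, c ≤ sigmoid (X i j ⬝ᵥ β) * (1 - sigmoid (X i j ⬝ᵥ β)))
    (hB : ∑ i, ∑ j, (X i j ⬝ᵥ b) ^ 2 ≤ B) :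
    |b ⬝ᵥ (-jacobian (fun x => ∑ i, Scluster (X i) W₁ x (Y i)) β -
        -jacobian (fun x => ∑ i, Scluster (X i) W₂ x (Y i)) β) *ᵥ b| ≤
      fnorm (W₁ - W₂) * ((1 + (√c)⁻¹) * m / 2 * B) := by
  rw [negJacobian_sub_negJacobian_sum_Scluster, Matrix.neg_mulVec, dotProduct_neg, abs_neg]
  refine (abs_dotProduct_jacobian_sum_Scluster_le X Y _ β b hc hY hvar).trans ?_
  exact mul_le_mul_of_nonneg_left (mul_le_mul_of_nonneg_left hB (by positivity)) (fnorm_nonneg _)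

end GEE

theorem gee_gradient_uniform_approximation_general
    (m : ℕ) (p : ℕ → ℕ)
    (Ω : ℕ → Type) [∀ n, MeasurableSpace (Ω n)]
    (P : ∀ n, Measure (Ω n))
    (X : ∀ n, Fin n → Matrix (Fin m) (Fin (p n)) ℝ)
    (Y : ∀ n, Fin n → Ω n → Fin m → ℝ)
    (β0 : ∀ n, Fin (p n) → ℝ)
    (hbin : ∀ n i ω j, Y n i ω j = 0 ∨ Y n i ω j = 1)
    (hA1 : ∃ C : ℝ, ∀ n (i : Fin n) j, vnorm (X n i j) ≤ C * Real.sqrt (p n))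
    (b1 b2 : ℝ) (hb1 : 0 < b1) (hb2 : b2 < 1)
    (hA2 : ∀ n (i : Fin n) j, b1 ≤ piv (X n i) (β0 n) j ∧ piv (X n i) (β0 n) j ≤ b2)
    (b3 b4 : ℝ)
    (hA3 : ∀ n, 0 < n → ∀ v : Fin (p n) → ℝ,
      b3 * (∑ k, v k ^ 2) ≤ (n : ℝ)⁻¹ * (v ⬝ᵥ (∑ i, (X n i)ᵀ * X n i).mulVec v) ∧
      (n : ℝ)⁻¹ * (v ⬝ᵥ (∑ i, (X n i)ᵀ * X n i).mulVec v) ≤ b4 * (∑ k, v k ^ 2))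
    (Rbar : Matrix (Fin m) (Fin m) ℝ)
    (Rhat : ∀ n, Ω n → Matrix (Fin m) (Fin m) ℝ)
    (hA4 : IsBigOP P (fun n ω => fnorm ((Rhat n ω)⁻¹ - Rbar⁻¹))
      (fun n => Real.sqrt (p n / n)))
    (hrate : Tendsto (fun n => (p n : ℝ) ^ 2 / n) atTop (𝓝 0)) :
    ∀ Δ : ℝ, 0 < Δ →
      IsBigOP P (fun n ω => sSup {r : ℝ | ∃ β b : Fin (p n) → ℝ,
          vnorm (β - β0 n) ≤ Δ * Real.sqrt (p n / n) ∧ vnorm b = 1 ∧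
          r = |b ⬝ᵥ
            ((-(jacobian (fun x => ∑ i, Scluster (X n i) ((Rhat n ω)⁻¹) x (Y n i ω)) β)) -
             (-(jacobian (fun x => ∑ i, Scluster (X n i) Rbar⁻¹ x (Y n i ω)) β))).mulVec b|})
        (fun n => Real.sqrt ((n : ℝ) * p n)) := by
  intro Δ _
  obtain ⟨CX, hCX⟩ := hA1
  set c := Real.exp (-2) * (b1 * (1 - b2))
  have hc : 0 < c := by have : 0 < 1 - b2 := sub_pos.2 hb2; positivity
  have hvar : ∀ᶠ n in atTop, ∀ (i : Fin n) j (β : Fin (p n) → ℝ),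
      vnorm (β - β0 n) ≤ Δ * √(p n / n) →
      c ≤ Real.sigmoid (X n i j ⬝ᵥ β) * (1 - Real.sigmoid (X n i j ⬝ᵥ β)) := by
    filter_upwards [eventually_abs_dotProduct_sub_le_one hCX hrate Δ] with n hn i j β hβ
    refine exp_neg_two_mul_le_sigmoid_var (hn i j β hβ) ?_ hb2.le
    rw [← logistic_eq_sigmoid]; exact hA2 n i j
  rw [show (fun n : ℕ => √((n : ℝ) * p n)) = fun n : ℕ => (n : ℝ) * √(p n / n) from
    funext fun n => (mul_sqrt_div_self (Nat.cast_nonneg n) _).symm]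
  refine IsBigOP.of_abs_le_mul (K := (1 + (√c)⁻¹) * m / 2 * |b4|) hA4
    (fun n => Nat.cast_nonneg n) ?_
  filter_upwards [hvar, eventually_gt_atTop 0] with n hvarn hn ω
  refine abs_sSup_le_of_forall_mem_Icc (by positivity) ?_
  rintro r ⟨β, b, hβ, hb, rfl⟩
  have hY : ∀ i j, Y n i ω j ∈ Set.Icc (0 : ℝ) 1 := fun i j => by
    rcases hbin n i ω j with h | h <;> simp [h]
  refine ⟨abs_nonneg _, (abs_dotProduct_negJacobian_sub_le _ _ _ _ β b hc hY
    (fun i j => hvarn i j β hβ) (sum_sum_sq_dotProduct_le hn hb (hA3 n hn b).2)).trans_eq ?_⟩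
  rw [abs_of_nonneg (fnorm_nonneg _)]
  ring

/-- Lemma 3: uniform approximation of the negative gradient D_n by D̄_n. -/
theorem gee_gradient_uniform_approximation
    (m : ℕ) (hm : 0 < m) (p : ℕ → ℕ) (hp : ∀ n, 0 < p n)
    (Ω : ℕ → Type) [∀ n, MeasurableSpace (Ω n)]
    (P : ∀ n, Measure (Ω n)) [∀ n, IsProbabilityMeasure (P n)]
    (X : ∀ n, Fin n → Matrix (Fin m) (Fin (p n)) ℝ)
    (Y : ∀ n, Fin n → Ω n → Fin m → ℝ)
    (β0 : ∀ n, Fin (p n) → ℝ)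
    (hmeas : ∀ n i, Measurable (Y n i))
    (hbin : ∀ n i ω j, Y n i ω j = 0 ∨ Y n i ω j = 1)
    (hindep : ∀ n, iIndepFun (fun i => Y n i) (P n))
    (hmean : ∀ n (i : Fin n) j, ∫ ω, Y n i ω j ∂(P n) = piv (X n i) (β0 n) j)
    (R0 : Matrix (Fin m) (Fin m) ℝ) (hR0 : R0.PosDef)
    (hcorr : ∀ n (i : Fin n) j j',
      ∫ ω, eps (X n i) (β0 n) (Y n i ω) j * eps (X n i) (β0 n) (Y n i ω) j' ∂(P n) = R0 j j')
    (hA1 : ∃ C : ℝ, ∀ n (i : Fin n) j, vnorm (X n i j) ≤ C * Real.sqrt (p n))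
    (b1 b2 : ℝ) (hb1 : 0 < b1) (hb2 : b2 < 1)
    (hA2 : ∀ n (i : Fin n) j, b1 ≤ piv (X n i) (β0 n) j ∧ piv (X n i) (β0 n) j ≤ b2)
    (hA2c : ∀ n, ∃ B : Set (Fin (p n) → ℝ), IsCompact B ∧ β0 n ∈ interior B)
    (b3 b4 : ℝ) (hb3 : 0 < b3)
    (hA3 : ∀ n, 0 < n → ∀ v : Fin (p n) → ℝ,
      b3 * (∑ k, v k ^ 2) ≤ (n : ℝ)⁻¹ * (v ⬝ᵥ (∑ i, (X n i)ᵀ * X n i).mulVec v) ∧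
      (n : ℝ)⁻¹ * (v ⬝ᵥ (∑ i, (X n i)ᵀ * X n i).mulVec v) ≤ b4 * (∑ k, v k ^ 2))
    (Rbar : Matrix (Fin m) (Fin m) ℝ) (hRbar : Rbar.PosDef)
    (Rhat : ∀ n, Ω n → Matrix (Fin m) (Fin m) ℝ)
    (hA4 : IsBigOP P (fun n ω => fnorm ((Rhat n ω)⁻¹ - Rbar⁻¹))
      (fun n => Real.sqrt (p n / n)))
    (hrate : Tendsto (fun n => (p n : ℝ) ^ 2 / n) atTop (𝓝 0)) :
    ∀ Δ : ℝ, 0 < Δ →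
      IsBigOP P (fun n ω => sSup {r : ℝ | ∃ β b : Fin (p n) → ℝ,
          vnorm (β - β0 n) ≤ Δ * Real.sqrt (p n / n) ∧ vnorm b = 1 ∧
          r = |b ⬝ᵥ
            ((-(jacobian (fun x => ∑ i, Scluster (X n i) ((Rhat n ω)⁻¹) x (Y n i ω)) β)) -
             (-(jacobian (fun x => ∑ i, Scluster (X n i) Rbar⁻¹ x (Y n i ω)) β))).mulVec b|})
        (fun n => Real.sqrt ((n : ℝ) * p n)) :=
  gee_gradient_uniform_approximation_general m p Ω P X Y β0 hbin hA1 b1 b2 hb1 hb2 hA2 b3 b4 hA3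
    Rbar Rhat hA4 hrate
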